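/- Fix 0 < δ ≤ 0.1 and a positive integer n with nδ ≥ 2. On the vertex set {x_1, …, x_n, y_1, …, y_n}, define μ by μ(x_i, x_j) = μ(y_i, y_j) = e^{−δ|i−j|}, μ(x_i, y_j) = μ(y_j, x_i) = e^{−δ|i−j| − 2δ}, and μ(u, u) = 1 (these are the pairwise correlations of the distribution P from the Chow-Liu counterexample construction). Let T be any tree on this vertex set whose edge set is {{x_i, x_{i+1}} : i < n} ∪ {{y_i, y_{i+1}} : i < n} ∪ {{x_{i₀}, y_{j₀}}} for some i₀, j₀ ∈ [n]. Then for every symmetric function ν that is multiplicative along T and satisfies |ν(u, v)| ≤ 1 for all u, v, one has max_{u,v} |ν(u, v) − μ(u, v)| ≥ 0.1. (Equivalently, every tree-structured distribution with unbiased ±1 marginals whose underlying tree is T has local total variation distance of order 2 at least 0.05 from P.) -/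

import Mathlib

open SimpleGraph

/-!
In `T` the path from `x_i` to `y_i` runs `x_i → x_{i₀} → y_{j₀} → y_i`, so by
multiplicativity and `|ν| ≤ 1` we get `|ν(x_i, y_i)| ≤ |ν(x_i, x_{i₀})|`. Choosing `i` at the end
of the path farther from `i₀` makes `δ|i − i₀| ≥ 0.95`, hence `μ(x_i, x_{i₀}) ≤ 1/1.95`, while
`μ(x_i, y_i) = e^{−2δ} ≥ 0.8`. If `ν` were within `0.1` of `μ` at both pairs, then
`0.7 < ν(x_i, y_i) < 1/1.95 + 0.1`, which is impossible.
-/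

/-- A symmetric function `ν` is multiplicative along a graph `T` if `ν u u = 1` and `ν u v`
is the product of `ν` over the edges of any (hence, in a tree, the unique) path from `u` to
`v`. -/
def MultAlong {V : Type*} (G : SimpleGraph V) (ν : V → V → ℝ) : Prop :=
  (∀ u : V, ν u u = 1) ∧
  ∀ (u v : V) (p : G.Walk u v), p.IsPath →
    ν u v = (p.darts.map fun d => ν d.fst d.snd).prod

/-- The set of consecutive edges `{x_i, x_{i+1}}` and `{y_i, y_{i+1}}` on the vertex set
`{x_1, …, x_n} ⊔ {y_1, …, y_n}` (with `x`'s on the left, `y`'s on the right). -/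
def pathEdges (n : ℕ) : Set (Sym2 (Fin n ⊕ Fin n)) :=
  {e | ∃ (i : Fin n) (h : (i : ℕ) + 1 < n),
      e = s(Sum.inl i, Sum.inl ⟨(i : ℕ) + 1, h⟩) ∨
      e = s(Sum.inr i, Sum.inr ⟨(i : ℕ) + 1, h⟩)}

namespace SimpleGraph

variable {V W : Type*} {G : SimpleGraph V}

theorem Preconnected.exists_isPath_support_subset_range {H : SimpleGraph W}
    (hH : H.Preconnected) (φ : H →g G) (a b : W) :
    ∃ p : G.Walk (φ a) (φ b), p.IsPath ∧ ∀ v ∈ p.support, v ∈ Set.range φ := by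
  classical
  obtain ⟨q⟩ := hH a b
  refine ⟨(q.map φ).bypass, (q.map φ).bypass_isPath, fun v hv => ?_⟩
  obtain ⟨w, -, rfl⟩ := List.mem_map.mp <|
    Walk.support_map φ q ▸ (q.map φ).support_bypass_subset_support hv
  exact ⟨w, rfl⟩

theorem Walk.IsPath.append_cons {u v w x : V} {p : G.Walk u v} {q : G.Walk w x}
    (hp : p.IsPath) (hq : q.IsPath) (h : G.Adj v w) (hpq : p.support.Disjoint q.support) :
    (p.append (cons h q)).IsPath := by
  rw [Walk.isPath_def, Walk.support_append, Walk.support_cons, List.tail_cons]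
  exact hp.support_nodup.append hq.support_nodup hpq

def pathGraph.homOfAdjSucc {n : ℕ} (f : Fin n → V)
    (hf : ∀ i j : Fin n, (i : ℕ) + 1 = j → G.Adj (f i) (f j)) : pathGraph n →g G where
  toFun := f
  map_rel' h := (pathGraph_adj.mp h).elim (hf _ _) fun h => (hf _ _ h).symm

end SimpleGraph

namespace MultAlong

variable {V : Type*} {G : SimpleGraph V} {ν : V → V → ℝ}

theorem apply_eq_mul_of_isPath_append (hν : MultAlong G ν) {u v w : V}
    (p : G.Walk u v) (q : G.Walk v w) (h : (p.append q).IsPath) :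
    ν u w = ν u v * ν v w := by
  rw [hν.2 _ _ _ h, hν.2 _ _ _ h.of_append_left, hν.2 _ _ _ h.of_append_right,
    Walk.darts_append, List.map_append, List.prod_append]

theorem abs_apply_le_of_isPath_append_cons (hν : MultAlong G ν) (hν1 : ∀ u v, |ν u v| ≤ 1)
    {u v w x : V} (p : G.Walk u v) (h : G.Adj v w) (q : G.Walk w x)
    (hpq : (p.append (Walk.cons h q)).IsPath) :
    |ν u x| ≤ |ν u v| := by
  have hcons : ν v x = ν v w * ν w x :=
    hν.apply_eq_mul_of_isPath_append (Walk.cons h Walk.nil) q hpq.of_append_right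
  rw [hν.apply_eq_mul_of_isPath_append p _ hpq, hcons, abs_mul, abs_mul]
  exact mul_le_of_le_one_right (abs_nonneg _) <|
    mul_le_one₀ (hν1 v w) (abs_nonneg _) (hν1 w x)

end MultAlong

namespace pathEdges

variable {n : ℕ} {T : SimpleGraph (Fin n ⊕ Fin n)}

theorem adj_inl (hT : pathEdges n ⊆ T.edgeSet) :
    ∀ i j : Fin n, (i : ℕ) + 1 = j → T.Adj (Sum.inl i) (Sum.inl j) := by
  rintro i ⟨j, hj⟩ rfl
  exact hT ⟨i, hj, Or.inl rfl⟩

theorem adj_inr (hT : pathEdges n ⊆ T.edgeSet) :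
    ∀ i j : Fin n, (i : ℕ) + 1 = j → T.Adj (Sum.inr i) (Sum.inr j) := by
  rintro i ⟨j, hj⟩ rfl
  exact hT ⟨i, hj, Or.inr rfl⟩

theorem abs_apply_inl_inr_le {ν : (Fin n ⊕ Fin n) → (Fin n ⊕ Fin n) → ℝ} (hν : MultAlong T ν)
    (hν1 : ∀ u v, |ν u v| ≤ 1) (hT : pathEdges n ⊆ T.edgeSet) {i₀ j₀ : Fin n}
    (hcross : T.Adj (Sum.inl i₀) (Sum.inr j₀)) (i j : Fin n) :
    |ν (Sum.inl i) (Sum.inr j)| ≤ |ν (Sum.inl i) (Sum.inl i₀)| := by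
  obtain ⟨p, hp, hp_inl⟩ := (pathGraph_preconnected n).exists_isPath_support_subset_range
    (pathGraph.homOfAdjSucc Sum.inl (adj_inl hT)) i i₀
  obtain ⟨q, hq, hq_inr⟩ := (pathGraph_preconnected n).exists_isPath_support_subset_range
    (pathGraph.homOfAdjSucc Sum.inr (adj_inr hT)) j₀ j
  refine hν.abs_apply_le_of_isPath_append_cons hν1 p hcross q <|
    hp.append_cons hq hcross fun v hvp hvq => ?_
  obtain ⟨a, rfl⟩ := hp_inl v hvp
  obtain ⟨b, hb⟩ := hq_inr _ hvq
  exact Sum.inr_ne_inl hb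

end pathEdges

theorem Fin.exists_sub_one_le_two_mul_abs_sub {n : ℕ} (i₀ : Fin n) :
    ∃ i : Fin n, ((n : ℝ) - 1) ≤ 2 * |((i : ℕ) : ℝ) - ((i₀ : ℕ) : ℝ)| := by
  have hn : 0 < n := i₀.pos
  by_contra! h
  have h0 := h ⟨0, hn⟩
  have h1 := h ⟨n - 1, by omega⟩
  push_cast [Nat.cast_sub hn] at h0 h1
  have hi₀ : ((i₀ : ℕ) : ℝ) + 1 ≤ n := by exact_mod_cast i₀.isLt
  rw [abs_sub_comm, abs_of_nonneg (by simp)] at h0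
  rw [abs_of_nonneg (by linarith)] at h1
  linarith

theorem Real.exp_neg_add_le_exp_neg_two_mul {δ t : ℝ} (hδ : δ ≤ 0.1) (ht : 0.95 ≤ t) :
    Real.exp (-t) + 0.2 ≤ Real.exp (-(2 * δ)) := by
  have hexp_t : 1.95 ≤ Real.exp t := by linarith [Real.add_one_le_exp t]
  have hexp_neg_t : Real.exp (-t) ≤ 1 / 1.95 := by
    rw [Real.exp_neg, one_div]
    exact inv_anti₀ (by norm_num) hexp_t
  linarith [Real.add_one_le_exp (-(2 * δ))]

theorem chow_liu_tree_models_far_from_P_general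
    (δ : ℝ) (hδ0 : 0 < δ) (hδ1 : δ ≤ 0.1) (n : ℕ) (hnδ : 2 ≤ (n : ℝ) * δ)
    (μ : (Fin n ⊕ Fin n) → (Fin n ⊕ Fin n) → ℝ)
    (hxx : ∀ i j : Fin n, μ (Sum.inl i) (Sum.inl j) =
      Real.exp (-δ * |((i : ℕ) : ℝ) - ((j : ℕ) : ℝ)|))
    (hxy : ∀ i j : Fin n, μ (Sum.inl i) (Sum.inr j) =
      Real.exp (-δ * |((i : ℕ) : ℝ) - ((j : ℕ) : ℝ)| - 2 * δ))
    (i₀ j₀ : Fin n)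
    (T : SimpleGraph (Fin n ⊕ Fin n))
    (hTedges : T.edgeSet = pathEdges n ∪ {s(Sum.inl i₀, Sum.inr j₀)})
    (ν : (Fin n ⊕ Fin n) → (Fin n ⊕ Fin n) → ℝ)
    (hνmult : MultAlong T ν)
    (hνle : ∀ u v, |ν u v| ≤ 1) :
    ∃ u v : Fin n ⊕ Fin n, (0.1 : ℝ) ≤ |ν u v - μ u v| := by
  have hpath : pathEdges n ⊆ T.edgeSet := hTedges ▸ Set.subset_union_left
  have hcross : T.Adj (Sum.inl i₀) (Sum.inr j₀) := by
    rw [← mem_edgeSet, hTedges]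
    exact Or.inr rfl
  obtain ⟨i, hi⟩ := Fin.exists_sub_one_le_two_mul_abs_sub i₀
  have hν_cross := pathEdges.abs_apply_inl_inr_le hνmult hνle hpath hcross i i
  have hfar : Real.exp (-(δ * |((i : ℕ) : ℝ) - ((i₀ : ℕ) : ℝ)|)) + 0.2 ≤ Real.exp (-(2 * δ)) :=
    Real.exp_neg_add_le_exp_neg_two_mul hδ1 (by nlinarith [hi, hδ0])
  by_contra! hclose
  have hxx_close := hclose (Sum.inl i) (Sum.inl i₀)
  have hxy_close := hclose (Sum.inl i) (Sum.inr i)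
  rw [hxx, neg_mul] at hxx_close
  rw [hxy, sub_self, abs_zero, mul_zero, zero_sub] at hxy_close
  have hxx_abs := (abs_sub_abs_le_abs_sub _ _).trans_lt hxx_close
  rw [abs_of_pos (Real.exp_pos _)] at hxx_abs
  linarith [le_abs_self (ν (Sum.inl i) (Sum.inr i)), (abs_lt.mp hxy_close).1]

/-- **Any tree model on a Chow-Liu output tree is far from the counterexample `P`.** Let
`0 < δ ≤ 0.1`, `nδ ≥ 2`, and let `μ` be the pairwise correlations of the counterexample
distribution: `μ(x_i,x_j) = μ(y_i,y_j) = e^{−δ|i−j|}`, `μ(x_i,y_j) = e^{−δ|i−j|−2δ}`. Let `T`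
be any tree whose edges are the two paths `x_1, …, x_n` and `y_1, …, y_n` together with a
single cross edge `{x_{i₀}, y_{j₀}}`. Then every symmetric function `ν` multiplicative along
`T` and bounded by `1` in absolute value satisfies `max_{u,v} |ν(u,v) − μ(u,v)| ≥ 0.1`. -/
theorem chow_liu_tree_models_far_from_P
    (δ : ℝ) (hδ0 : 0 < δ) (hδ1 : δ ≤ 0.1) (n : ℕ) (hnδ : 2 ≤ (n : ℝ) * δ)
    (μ : (Fin n ⊕ Fin n) → (Fin n ⊕ Fin n) → ℝ)
    (hxx : ∀ i j : Fin n, μ (Sum.inl i) (Sum.inl j) =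
      Real.exp (-δ * |((i : ℕ) : ℝ) - ((j : ℕ) : ℝ)|))
    (hyy : ∀ i j : Fin n, μ (Sum.inr i) (Sum.inr j) =
      Real.exp (-δ * |((i : ℕ) : ℝ) - ((j : ℕ) : ℝ)|))
    (hxy : ∀ i j : Fin n, μ (Sum.inl i) (Sum.inr j) =
      Real.exp (-δ * |((i : ℕ) : ℝ) - ((j : ℕ) : ℝ)| - 2 * δ))
    (hyx : ∀ i j : Fin n, μ (Sum.inr j) (Sum.inl i) =
      Real.exp (-δ * |((i : ℕ) : ℝ) - ((j : ℕ) : ℝ)| - 2 * δ))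
    (i₀ j₀ : Fin n)
    (T : SimpleGraph (Fin n ⊕ Fin n)) (hT : T.IsTree)
    (hTedges : T.edgeSet = pathEdges n ∪ {s(Sum.inl i₀, Sum.inr j₀)})
    (ν : (Fin n ⊕ Fin n) → (Fin n ⊕ Fin n) → ℝ)
    (hνsymm : ∀ u v, ν u v = ν v u)
    (hνmult : MultAlong T ν)
    (hνle : ∀ u v, |ν u v| ≤ 1) :
    ∃ u v : Fin n ⊕ Fin n, (0.1 : ℝ) ≤ |ν u v - μ u v| :=
  chow_liu_tree_models_far_from_P_general δ hδ0 hδ1 n hnδ μ hxx hxy i₀ j₀ T hTedges ν hνmult hνle
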